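/- arXiv:1304.0172 — 6 statements merged into one kernel-verified Lean document; each statement's English description precedes it below -/
import Mathlib

section
/- Fine's theorem: For a prime p and n ∈ ℕ with base-p digits n_σ, the number of j ∈ {0,1,...,n} such that C(n,j) is NOT divisible by p equals the product over all σ of (n_σ + 1). Equivalently, the number of j ∈ {0,...,n} with p ∣ C(n,j) equals (n+1) − Π_σ (n_σ + 1). -/
/-!
By Lucas's theorem, `C(n, j) ≡ ∏_σ C(n_σ, j_σ) [MOD p]`, and for a digit `n_σ < p` the factor
`C(n_σ, j_σ)` is divisible by `p` exactly when `j_σ > n_σ`. So `p ∤ C(n, j)` iff every base-`p`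
digit of `j` is at most the corresponding digit of `n` (for `j > n` both sides fail, as
`C(n, j) = 0`). Such `j` are chosen digit by digit, `n_σ + 1` choices for the σ-th digit.
-/

/-- The σ-th digit of `x` in base `p`. -/
def digit (p x σ : ℕ) : ℕ := x / p ^ σ % p

open Finset

theorem digit_lt (x σ : ℕ) {p : ℕ} (hp : 0 < p) : digit p x σ < p := Nat.mod_lt _ hp

theorem Nat.Prime.dvd_choose_iff_lt {p a b : ℕ} (hp : p.Prime) (ha : a < p) :
    p ∣ a.choose b ↔ a < b := by
  refine ⟨fun hdvd => ?_, fun hab => Nat.choose_eq_zero_of_lt hab ▸ dvd_zero p⟩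
  by_contra! hba
  have hfact : a.choose b ∣ a.factorial :=
    (dvd_mul_right _ _).trans (Dvd.intro _ (Nat.choose_mul_factorial_mul_factorial hba))
  exact ha.not_ge (hp.dvd_factorial.mp (hdvd.trans hfact))

theorem not_dvd_choose_iff_digit_le {p n j a : ℕ} (hp : p.Prime) (hn : n < p ^ a)
    (hj : j < p ^ a) : ¬ p ∣ n.choose j ↔ ∀ σ < a, digit p j σ ≤ digit p n σ := by
  have := Fact.mk hp
  have hlucas : n.choose j ≡ ∏ σ ∈ range a, (digit p n σ).choose (digit p j σ) [MOD p] :=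
    Choose.choose_modEq_prod_range_choose_nat hn hj
  rw [hlucas.dvd_iff dvd_rfl, hp.prime.dvd_finsetProd_iff]
  simp only [mem_range, hp.dvd_choose_iff_lt (digit_lt n _ hp.pos), not_exists, not_and,
    not_lt]

theorem card_filter_digit_le_range_pow (n a : ℕ) {p : ℕ} (hp : 0 < p) :
    #{j ∈ range (p ^ a) | ∀ σ < a, digit p j σ ≤ digit p n σ}
      = ∏ σ ∈ range a, (digit p n σ + 1) := by
  have hrange : range (p ^ a) = (univ : Finset (Fin (p ^ a))).map Fin.valEmbedding := by
    rw [Fin.map_valEmbedding_univ, Nat.Iio_eq_range]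
  rw [hrange, filter_map, card_map, ← Fin.prod_univ_eq_prod_range]
  have hdigits : ∀ σ : Fin a, #{d : Fin p | (d : ℕ) < digit p n σ + 1} = digit p n σ + 1 :=
    fun σ => by rw [Fin.card_filter_val_lt, min_eq_right (digit_lt n σ hp)]
  rw [← prod_congr rfl fun σ _ => hdigits σ, ← Fintype.card_piFinset]
  -- `finFunctionFinEquiv.symm` sends `j < p ^ a` to its vector of base-`p` digits.
  refine card_equiv finFunctionFinEquiv.symm fun j => ?_
  simp [Fin.forall_iff, digit]

theorem card_filter_not_dvd_choose {p n a : ℕ} (hp : p.Prime) (hn : n < p ^ a) :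
    #{j ∈ range (n + 1) | ¬ p ∣ n.choose j} = ∏ σ ∈ range a, (digit p n σ + 1) := by
  rw [← card_filter_digit_le_range_pow n a hp.pos]
  congr 1
  ext j
  simp only [mem_filter, mem_range]
  constructor
  · rintro ⟨hjn, hndvd⟩
    exact ⟨by omega, (not_dvd_choose_iff_digit_le hp hn (by omega)).mp hndvd⟩
  · rintro ⟨hj, hdigits⟩
    have hndvd := (not_dvd_choose_iff_digit_le hp hn hj).mpr hdigits
    refine ⟨?_, hndvd⟩
    by_contra! hnj
    exact hndvd (Nat.choose_eq_zero_of_lt (show n < j by omega) ▸ dvd_zero p)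

/-- **Fine's theorem**: the number of `j ∈ {0,…,n}` with `C(n,j)` not divisible by the
prime `p` equals `∏_σ (n_σ + 1)`, where `n_σ` are the base-`p` digits of `n`;
equivalently, the number of `j ∈ {0,…,n}` with `p ∣ C(n,j)` equals
`(n+1) - ∏_σ (n_σ + 1)`. (Digits with index `σ > n` vanish, so the product over
`σ < n+1` is the full product.) -/
theorem fine_theorem (p : ℕ) (hp : p.Prime) (n : ℕ) :
    (((Finset.range (n + 1)).filter fun j => ¬ p ∣ Nat.choose n j).card
      = ∏ σ ∈ Finset.range (n + 1), (digit p n σ + 1)) ∧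
    (((Finset.range (n + 1)).filter fun j => p ∣ Nat.choose n j).card
      = (n + 1) - ∏ σ ∈ Finset.range (n + 1), (digit p n σ + 1)) := by
  have hcount :=
    card_filter_not_dvd_choose hp ((Nat.lt_add_one n).trans (Nat.lt_pow_self hp.one_lt))
  refine ⟨hcount, ?_⟩
  have hsplit := card_filter_add_card_filter_not (s := range (n + 1)) (fun j => p ∣ n.choose j)
  rw [card_range] at hsplit
  omega
end

section
/- For a prime p, n ∈ ℕ with base-p digits n_σ, and i ≥ 1, the number of j ∈ {0,...,n} such that p ∣ C(n,j) and the pair (n,j) lies in some class η̄ with η ≥ i equals Σ(i,n) = n + 1 − (1 + Σ_{μ=0}^{i-1} n_μ p^μ) · Π_{σ=i}^∞ (n_σ + 1). -/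
/-- For a pair `(n,j)` with `p ∣ C(n,j)`, the class index `i` of `(n,j)`:
with `L := max {σ | j_σ > n_σ}`, it is `i := min {σ | σ > L ∧ j_σ < n_σ}`. -/
noncomputable def classIdx (p n j : ℕ) : ℕ :=
  sInf {σ : ℕ | σ > sSup {τ : ℕ | digit p n τ < digit p j τ} ∧ digit p j σ < digit p n σ}

/-!
By Lucas's theorem, `p ∣ C(n,j)` iff some base-`p` digit of `j` exceeds the corresponding digit
of `n`. Comparing digits from the top, the pair `(n,j)` is *not* counted exactly when
`j mod p^i ≤ n mod p^i` and every digit of `j` in a position `σ ≥ i` is at most `n_σ`.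
Writing `j = p^i q + r`, these `j` are counted by the `n mod p^i + 1` choices of `r` times the
number of `q` lying digitwise below `⌊n / p^i⌋`, which is `∏_{σ ≥ i} (n_σ + 1)`; and
`n mod p^i = Σ_{μ<i} n_μ p^μ`.
-/

open Finset

section Digits

variable {p : ℕ}

theorem digit_zero (p x : ℕ) : digit p x 0 = x % p := by
  simp [digit]

theorem digit_div_pow (p x k σ : ℕ) : digit p (x / p ^ k) σ = digit p x (k + σ) := by
  simp [digit, Nat.div_div_eq_div_mul, pow_add]

theorem digit_div (p x σ : ℕ) : digit p (x / p) σ = digit p x (σ + 1) := by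
  simpa [add_comm] using digit_div_pow p x 1 σ

theorem div_pow_eq_mul_div_pow_succ_add_digit (p x t : ℕ) :
    x / p ^ t = p * (x / p ^ (t + 1)) + digit p x t := by
  rw [pow_succ, ← Nat.div_div_eq_div_mul, digit, Nat.div_add_mod]

theorem digit_eq_zero_of_lt {x σ : ℕ} (h : x < p ^ σ) : digit p x σ = 0 := by
  simp [digit, Nat.div_eq_of_lt h]

theorem digit_mod_pow_of_lt {x σ i : ℕ} (h : σ < i) : digit p (x % p ^ i) σ = digit p x σ := by
  rw [digit, ← Nat.add_sub_of_le h.le, pow_add, Nat.mod_mul_right_div_self,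
    Nat.mod_mod_of_dvd _ (dvd_pow_self p (by omega)), digit]

theorem digit_mod_pow_of_le (hp : 0 < p) {x σ i : ℕ} (h : i ≤ σ) : digit p (x % p ^ i) σ = 0 :=
  digit_eq_zero_of_lt <| (Nat.mod_lt _ (pow_pos hp i)).trans_le (Nat.pow_le_pow_right hp h)

theorem sum_digit_mul_pow_eq_mod_pow (p x i : ℕ) :
    ∑ μ ∈ range i, digit p x μ * p ^ μ = x % p ^ i := by
  induction i with
  | zero => simp [Nat.mod_one]
  | succ i ih =>
    rw [sum_range_succ, ih, pow_succ, Nat.mod_mul, digit]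
    ring

theorem le_of_forall_digit_le (hp : 1 < p) {x y : ℕ} (h : ∀ σ, digit p x σ ≤ digit p y σ) :
    x ≤ y := by
  have hx : x < p ^ (x + y) :=
    (Nat.lt_pow_self hp).trans_le (Nat.pow_le_pow_right (by omega) (by omega))
  have hy : y < p ^ (x + y) :=
    (Nat.lt_pow_self hp).trans_le (Nat.pow_le_pow_right (by omega) (by omega))
  calc x = ∑ σ ∈ range (x + y), digit p x σ * p ^ σ := by
        rw [sum_digit_mul_pow_eq_mod_pow, Nat.mod_eq_of_lt hx]
    _ ≤ ∑ σ ∈ range (x + y), digit p y σ * p ^ σ :=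
        sum_le_sum fun σ _ => Nat.mul_le_mul_right _ (h σ)
    _ = y := by rw [sum_digit_mul_pow_eq_mod_pow, Nat.mod_eq_of_lt hy]

theorem exists_digit_lt_of_lt (hp : 1 < p) {x y : ℕ} (h : x < y) :
    ∃ σ, digit p x σ < digit p y σ := by
  by_contra! h'
  exact h.not_ge (le_of_forall_digit_le hp h')

theorem exists_digit_lt_above_of_le (hp : 1 < p) {x y t : ℕ} (hxy : x ≤ y)
    (ht : digit p y t < digit p x t) : ∃ σ, t < σ ∧ digit p x σ < digit p y σ := by
  by_contra! h
  have hhigh : y / p ^ (t + 1) ≤ x / p ^ (t + 1) := le_of_forall_digit_le hp fun σ => by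
    rw [digit_div_pow, digit_div_pow]
    exact h _ (by omega)
  have hlow : y / p ^ t < x / p ^ t := by
    rw [div_pow_eq_mul_div_pow_succ_add_digit p x, div_pow_eq_mul_div_pow_succ_add_digit p y]
    have := Nat.mul_le_mul_left p hhigh
    omega
  exact hlow.not_ge (Nat.div_le_div_right hxy)

theorem exists_digit_lt_between_of_mod_pow_le (hp : 1 < p) {x y t K : ℕ}
    (hxy : x % p ^ K ≤ y % p ^ K) (ht : digit p y t < digit p x t) (htK : t < K) :
    ∃ σ, t < σ ∧ σ < K ∧ digit p x σ < digit p y σ := by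
  rw [← digit_mod_pow_of_lt htK, ← digit_mod_pow_of_lt (x := x) htK] at ht
  obtain ⟨σ, htσ, hσ⟩ := exists_digit_lt_above_of_le hp hxy ht
  have hσK : σ < K := by
    by_contra! h
    rw [digit_mod_pow_of_le (x := y) (by omega) h] at hσ
    omega
  rw [digit_mod_pow_of_lt hσK, digit_mod_pow_of_lt hσK] at hσ
  exact ⟨σ, htσ, hσK, hσ⟩

theorem forall_digit_div_pow_le_iff {x y i : ℕ} :
    (∀ σ, digit p (x / p ^ i) σ ≤ digit p (y / p ^ i) σ) ↔
      ∀ σ, i ≤ σ → digit p x σ ≤ digit p y σ := by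
  simp only [digit_div_pow]
  refine ⟨fun h σ hσ => ?_, fun h σ => h _ (by omega)⟩
  simpa [Nat.add_sub_cancel' hσ] using h (σ - i)

end Digits

theorem Nat.Prime.dvd_choose_iff_exists_digit_lt {p : ℕ} (hp : p.Prime) (n j : ℕ) :
    p ∣ n.choose j ↔ ∃ σ, digit p n σ < digit p j σ := by
  have := Fact.mk hp
  have hn : n < p ^ (n + j) :=
    (Nat.lt_pow_self hp.one_lt).trans_le (Nat.pow_le_pow_right hp.pos (by omega))
  have hj : j < p ^ (n + j) :=
    (Nat.lt_pow_self hp.one_lt).trans_le (Nat.pow_le_pow_right hp.pos (by omega))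
  rw [(Choose.choose_modEq_prod_range_choose_nat hn hj).dvd_iff dvd_rfl,
    hp.prime.dvd_finsetProd_iff]
  have hdigit : ∀ σ, p ∣ (n / p ^ σ % p).choose (j / p ^ σ % p) ↔ digit p n σ < digit p j σ :=
    fun σ => hp.dvd_choose_iff_lt (Nat.mod_lt _ hp.pos)
  simp only [mem_range, hdigit]
  refine ⟨fun ⟨σ, _, hσ⟩ => ⟨σ, hσ⟩, fun ⟨σ, hσ⟩ => ⟨σ, ?_, hσ⟩⟩
  by_contra! h
  rw [digit_eq_zero_of_lt (hj.trans_le (Nat.pow_le_pow_right hp.pos h))] at hσ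
  omega

section ClassIdx

variable {p n j : ℕ}

theorem bddAbove_setOf_digit_lt (hp : 1 < p) : BddAbove {τ | digit p n τ < digit p j τ} := by
  refine ⟨j, fun τ hτ => ?_⟩
  by_contra! h
  rw [Set.mem_ofPred_eq, digit_eq_zero_of_lt ((Nat.lt_pow_self hp).trans
    (Nat.pow_lt_pow_right hp h))] at hτ
  omega

theorem sSup_lt_classIdx (hp : 1 < p) (hjn : j ≤ n) (hA : ∃ τ, digit p n τ < digit p j τ) :
    sSup {τ | digit p n τ < digit p j τ} < classIdx p n j ∧
      digit p j (classIdx p n j) < digit p n (classIdx p n j) := by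
  obtain ⟨σ, hσ⟩ :=
    exists_digit_lt_above_of_le hp hjn (Nat.sSup_mem hA (bddAbove_setOf_digit_lt hp))
  exact Nat.sInf_mem (s := {σ | σ > sSup {τ | digit p n τ < digit p j τ} ∧
    digit p j σ < digit p n σ}) ⟨σ, hσ⟩

theorem classIdx_le {σ : ℕ} (hσ : sSup {τ | digit p n τ < digit p j τ} < σ)
    (hσ' : digit p j σ < digit p n σ) : classIdx p n j ≤ σ :=
  Nat.sInf_le ⟨hσ, hσ'⟩

theorem dvd_choose_and_le_classIdx_iff (hp : p.Prime) (hjn : j ≤ n) (i : ℕ) :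
    p ∣ n.choose j ∧ i ≤ classIdx p n j ↔
      ¬ (j % p ^ i ≤ n % p ^ i ∧ ∀ σ, i ≤ σ → digit p j σ ≤ digit p n σ) := by
  have hp1 := hp.one_lt
  have hbdd := bddAbove_setOf_digit_lt (n := n) (j := j) hp1
  rw [hp.dvd_choose_iff_exists_digit_lt]
  constructor
  · rintro ⟨hA, hi⟩ ⟨hmod, hhigh⟩
    have hL := Nat.sSup_mem hA hbdd
    have hLi : sSup {τ | digit p n τ < digit p j τ} < i := by
      by_contra! h
      exact (hhigh _ h).not_gt hL
    obtain ⟨σ, hLσ, hσi, hσ⟩ := exists_digit_lt_between_of_mod_pow_le hp1 hmod hL hLi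
    have := classIdx_le hLσ hσ
    omega
  · intro h
    by_cases hhigh : ∀ σ, i ≤ σ → digit p j σ ≤ digit p n σ
    · have hmod : n % p ^ i < j % p ^ i := by
        by_contra! h'
        exact h ⟨h', hhigh⟩
      obtain ⟨τ, hτ⟩ := exists_digit_lt_of_lt hp1 hmod
      have hτi : τ < i := by
        by_contra! h'
        rw [digit_mod_pow_of_le (x := j) hp.pos h'] at hτ
        omega
      rw [digit_mod_pow_of_lt hτi, digit_mod_pow_of_lt hτi] at hτ
      refine ⟨⟨τ, hτ⟩, ?_⟩
      by_contra! hcls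
      obtain ⟨hLcls, hcls'⟩ := sSup_lt_classIdx hp1 hjn ⟨τ, hτ⟩
      obtain ⟨σ, hclsσ, -, hσ⟩ := exists_digit_lt_between_of_mod_pow_le hp1 hmod.le hcls' hcls
      have := le_csSup hbdd hσ
      omega
    · push Not at hhigh
      obtain ⟨σ, hiσ, hσ⟩ := hhigh
      have := le_csSup hbdd hσ
      have := (sSup_lt_classIdx hp1 hjn ⟨σ, hσ⟩).1
      exact ⟨⟨σ, hσ⟩, by omega⟩

end ClassIdx

section Counting

theorem card_filter_mod_le_and_div_mem {d c : ℕ} (hd : 0 < d) (T : Finset ℕ)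
    (hT : ∀ t ∈ T, t ≤ c / d) :
    #{q ∈ range (c + 1) | q % d ≤ c % d ∧ q / d ∈ T} = (c % d + 1) * #T := by
  rw [← card_range (c % d + 1), ← card_product]
  have hc := Nat.div_add_mod c d
  refine card_nbij' (fun q => (q % d, q / d)) (fun x => d * x.2 + x.1) ?_ ?_ ?_ ?_
  · intro q hq
    simp only [coe_filter, mem_range, Set.mem_ofPred_eq, coe_product, coe_range, Set.mem_prod,
      Set.mem_Iio, mem_coe] at hq ⊢
    exact ⟨by omega, hq.2.2⟩
  · intro x hx
    simp only [coe_product, coe_range, Set.mem_prod, Set.mem_Iio, mem_coe, coe_filter, mem_range,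
      Set.mem_ofPred_eq] at hx ⊢
    have hx1 : x.1 < d := by have := Nat.mod_lt c hd; omega
    rw [Nat.mul_add_mod, Nat.mod_eq_of_lt hx1, Nat.mul_add_div hd, Nat.div_eq_of_lt hx1, add_zero]
    have := Nat.mul_le_mul_left d (hT _ hx.2)
    exact ⟨by omega, by omega, hx.2⟩
  · intro q _
    exact Nat.div_add_mod q d
  · intro x hx
    simp only [coe_product, coe_range, Set.mem_prod, Set.mem_Iio] at hx
    have hx1 : x.1 < d := by have := Nat.mod_lt c hd; omega
    simp [Nat.mod_eq_of_lt hx1, Nat.mul_add_div hd, Nat.div_eq_of_lt hx1]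

variable {p : ℕ}

open Classical in
noncomputable def digitDominated (p c : ℕ) : Finset ℕ :=
  {q ∈ range (c + 1) | ∀ σ, digit p q σ ≤ digit p c σ}

theorem mem_digitDominated (hp : 1 < p) {c q : ℕ} :
    q ∈ digitDominated p c ↔ ∀ σ, digit p q σ ≤ digit p c σ := by
  simp only [digitDominated, mem_filter, mem_range, and_iff_right_iff_imp]
  exact fun h => Nat.lt_succ_of_le (le_of_forall_digit_le hp h)

theorem le_of_mem_digitDominated {c q : ℕ} (h : q ∈ digitDominated p c) : q ≤ c := by
  simp only [digitDominated, mem_filter, mem_range] at h; omega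

theorem card_digitDominated_eq_mul (hp : 1 < p) (c : ℕ) :
    #(digitDominated p c) = (c % p + 1) * #(digitDominated p (c / p)) := by
  rw [← card_filter_mod_le_and_div_mem (by omega) _ fun t => le_of_mem_digitDominated]
  classical
  refine congrArg card (filter_congr fun q _ => ?_)
  rw [mem_digitDominated hp, ← Nat.and_forall_add_one, digit_zero, digit_zero]
  simp only [digit_div]

theorem card_digitDominated (hp : 1 < p) {K c : ℕ} (hc : c < p ^ K) :
    #(digitDominated p c) = ∏ σ ∈ range K, (digit p c σ + 1) := by
  induction K generalizing c with
  | zero =>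
    obtain rfl : c = 0 := by simpa using hc
    classical
    simp only [digitDominated, zero_add, range_one, prod_range_zero]
    rw [filter_true_of_mem fun q hq => by simp [mem_singleton.mp hq], card_singleton]
  | succ K ih =>
    rw [card_digitDominated_eq_mul hp, ih (Nat.div_lt_of_lt_mul (by rwa [← pow_succ'])),
      prod_range_succ', digit_zero, mul_comm]
    simp only [digit_div]

end Counting

theorem card_classes_ge_eq_Sigma_general (p : ℕ) (hp : p.Prime) (n i : ℕ) :
    (((Finset.range (n + 1)).filter fun j =>
        p ∣ Nat.choose n j ∧ i ≤ classIdx p n j).card)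
      = n + 1 - (1 + ∑ μ ∈ Finset.range i, digit p n μ * p ^ μ) *
          ∏ σ ∈ Finset.Ico i (n + 1), (digit p n σ + 1) := by
  have hcompl : #{j ∈ range (n + 1) | ¬ (p ∣ n.choose j ∧ i ≤ classIdx p n j)} =
      (n % p ^ i + 1) * #(digitDominated p (n / p ^ i)) := by
    rw [← card_filter_mod_le_and_div_mem (pow_pos hp.pos i) _ fun t => le_of_mem_digitDominated]
    refine congrArg card (filter_congr fun j hj => ?_)
    rw [dvd_choose_and_le_classIdx_iff hp (Nat.le_of_lt_succ (mem_range.mp hj)), not_not,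
      mem_digitDominated hp.one_lt, forall_digit_div_pow_le_iff]
  have hprod : ∏ σ ∈ Ico i (n + 1), (digit p n σ + 1) = #(digitDominated p (n / p ^ i)) := by
    have hc : n / p ^ i < p ^ (n + 1 - i) := by
      rw [Nat.div_lt_iff_lt_mul (pow_pos hp.pos i), ← pow_add]
      exact (Nat.lt_pow_self hp.one_lt).trans_le (Nat.pow_le_pow_right hp.pos (by omega))
    rw [card_digitDominated hp.one_lt hc, prod_Ico_eq_prod_range]
    simp only [digit_div_pow]
  have hsplit := card_filter_add_card_filter_not (s := range (n + 1))
    fun j => p ∣ n.choose j ∧ i ≤ classIdx p n j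
  rw [card_range] at hsplit
  rw [sum_digit_mul_pow_eq_mod_pow, hprod, add_comm 1, ← hcompl]
  omega

/-- The number of `j ∈ {0,…,n}` with `p ∣ C(n,j)` and `(n,j)` in some class `η̄` with
`η ≥ i` equals `Σ(i,n) = n + 1 − (1 + Σ_{μ<i} n_μ p^μ) · ∏_{σ≥i} (n_σ + 1)`.
(Digits of `n` with index `σ > n` vanish, so the product over `i ≤ σ < n+1` is
the full infinite product.) -/
theorem card_classes_ge_eq_Sigma (p : ℕ) (hp : p.Prime) (n i : ℕ) (hi : 1 ≤ i) :
    (((Finset.range (n + 1)).filter fun j =>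
        p ∣ Nat.choose n j ∧ i ≤ classIdx p n j).card)
      = n + 1 - (1 + ∑ μ ∈ Finset.range i, digit p n μ * p ^ μ) *
          ∏ σ ∈ Finset.Ico i (n + 1), (digit p n σ + 1) :=
  card_classes_ge_eq_Sigma_general p hp n i
end

section
/- If F is a field of characteristic 0, then for every n ≥ 2 and every k ∈ {-1, 0, ..., n-1}, the k-nucleus of the normal rational curve V_1^n in P(F^{n+1}) is empty. Equivalently, the intersection over all u ∈ F of the linear span of the first k+1 osculating columns (1, C(1,0)u, C(2,0)u², ..., C(n,0)uⁿ), ..., i.e. of the k-osculating subspaces at all points of the curve, is the zero subspace. -/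
/-!
The `t`-th spanning column at `u` has entries `C(r,t) u^(r-t) = ((X + C u)^r).coeff t`, so pairing
it with the coefficient vector of `p` (of degree `≤ n`) gives `(p.comp (X + C u)).coeff t`. For
`p = (X - C u)^n` this is `(X^n).coeff t = 0` as `t < c ≤ n`: the coefficients of `(X - C u)^n`
annihilate the osculating subspace at `u`. Hence for `v` in the nucleus the polynomial
`∑ r, C(n,r) v_r X^(n-r)` vanishes at every point of the infinite field `F`, so it is zero, and
in characteristic `0` the binomial coefficients are nonzero, so `v = 0`.
-/

/-- The `k`-osculating subspace (here parametrized by `c = k+1`, the number of spanning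
columns) of the normal rational curve `x ↦ (1, x, …, xⁿ)` in `F^{n+1}` at the point with
parameter `u`: the span of the first `c` columns of the matrix with entries
`C(r,s) u^{r−s}` (`0 ≤ s ≤ r ≤ n`), i.e. of the point and its first `c-1`
Hasse-derivative points. -/
def oscSub (F : Type) [Field F] (n : ℕ) (u : F) (c : ℕ) : Submodule F (Fin (n + 1) → F) :=
  Submodule.span F
    (Set.range fun s : Fin c => fun r : Fin (n + 1) => (r.1.choose s.1 : F) * u ^ (r.1 - s.1))

/-- The `k`-osculating subspace (with `c = k+1`) at the point `u = ∞` of the curve: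
the span of the last `c` standard basis vectors `e_n, …, e_{n-c+1}`. -/
def oscInfty (F : Type) [Field F] (n c : ℕ) : Submodule F (Fin (n + 1) → F) :=
  Submodule.span F {v | ∃ i : Fin (n + 1), n + 1 ≤ i.1 + c ∧ v = Pi.single i 1}

/-- The `k`-nucleus (with `c = k+1`) of the normal rational curve: the intersection of
all its `k`-osculating subspaces. -/
def nucleus (F : Type) [Field F] (n c : ℕ) : Submodule F (Fin (n + 1) → F) :=
  (⨅ u : F, oscSub F n u c) ⊓ oscInfty F n c

open Polynomial

section

variable {R : Type*} [CommRing R]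

theorem Polynomial.coeff_comp_X_add_C {p : R[X]} {n : ℕ} (hp : p.natDegree < n) (u : R) (t : ℕ) :
    (p.comp (X + C u)).coeff t = ∑ r ∈ Finset.range n, p.coeff r * (r.choose t * u ^ (r - t)) := by
  rw [comp, eval₂_eq_sum_range' C hp, finsetSum_coeff]
  simp only [coeff_C_mul, coeff_X_add_C_pow, mul_comm]

theorem Polynomial.coeff_sum_C_mul_X_pow_sub {n : ℕ} (a : Fin (n + 1) → R) (j : Fin (n + 1)) :
    (∑ i, C (a i) * X ^ (n - i : ℕ)).coeff (n - j) = a j := by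
  rw [finsetSum_coeff, Finset.sum_eq_single j]
  · simp
  · intro i _ hij
    rw [coeff_C_mul_X_pow, if_neg]
    omega
  · simp

end

theorem coeff_X_sub_C_pow_dotProduct_eq_zero_of_mem_oscSub {F : Type} [Field F] {n c : ℕ} (hc : c ≤ n) {u : F}
    {v : Fin (n + 1) → F} (hv : v ∈ oscSub F n u c) :
    (fun r : Fin (n + 1) => ((X - C u) ^ n).coeff r) ⬝ᵥ v = 0 := by
  induction hv using Submodule.span_induction with
  | mem _ hw =>
    obtain ⟨t, rfl⟩ := hw
    have hcomp : ((X - C u) ^ n).comp (X + C u) = X ^ n := by simp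
    have hdeg : ((X - C u) ^ n).natDegree < n + 1 := by
      rw [sub_eq_add_neg, ← C_neg, natDegree_pow_X_add_C]; omega
    have h := coeff_comp_X_add_C hdeg u t
    rw [hcomp, coeff_X_pow, if_neg (by omega), ← Fin.sum_univ_eq_sum_range] at h
    exact h.symm
  | zero => simp
  | add x y _ _ hx hy => rw [dotProduct_add, hx, hy, add_zero]
  | smul a x _ hx => rw [dotProduct_smul, hx, smul_zero]

theorem nucleus_eq_bot_of_charZero_general (F : Type) [Field F] [CharZero F] (n c : ℕ)
    (hc : c ≤ n) :
    nucleus F n c = ⊥ := by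
  refine eq_bot_iff.2 fun v hv => ?_
  have hosc : ∀ u, v ∈ oscSub F n u c := Submodule.mem_iInf _ |>.1 (Submodule.mem_inf.1 hv).1
  set Q : F[X] := ∑ r : Fin (n + 1), C (v r * n.choose r) * X ^ (n - r : ℕ)
  have hQ : Q = 0 := Polynomial.funext fun w => by
    have := coeff_X_sub_C_pow_dotProduct_eq_zero_of_mem_oscSub hc (hosc (-w))
    rw [C_neg, sub_neg_eq_add] at this
    simp only [dotProduct, coeff_X_add_C_pow] at this
    simp only [Q, eval_finsetSum, eval_mul, eval_C, eval_pow, eval_X, eval_zero, ← this]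
    exact Finset.sum_congr rfl fun r _ => by ring
  ext r
  have hcoeff := congrArg (coeff · (n - r)) hQ
  simp only [Q, coeff_sum_C_mul_X_pow_sub, coeff_zero] at hcoeff
  exact (mul_eq_zero.1 hcoeff).resolve_right (Nat.cast_ne_zero.2 (Nat.choose_pos (by omega)).ne')

/-- Over a field of characteristic `0`, for every `n ≥ 2` and every
`k ∈ {-1, 0, …, n-1}` (i.e. `c = k+1 ∈ {0, …, n}`), the `k`-nucleus of the normal
rational curve `V_1^n` is empty (the zero subspace). -/
theorem nucleus_eq_bot_of_charZero (F : Type) [Field F] [CharZero F] (n c : ℕ)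
    (hn : 2 ≤ n) (hc : c ≤ n) :
    nucleus F n c = ⊥ :=
  nucleus_eq_bot_of_charZero_general F n c hc
end

section
/- Let F be a field with at least k+1 elements and let c_0,...,c_n be the standard basis of F^{n+1}. The k-nucleus of the normal rational curve V_1^n (i.e. the intersection of all k-osculating subspaces) equals the linear span of those basis vectors c_j with index j ∈ {0,...,n} satisfying C(k+1, j) ≡ C(k+2, j) ≡ ... ≡ C(n, j) ≡ 0 modulo char F. -/
open Finset Polynomial Matrix

lemma exists_cast_choose_ne_zero {R : Type*} [AddMonoidWithOne R] [NeZero (1 : R)] (c j : ℕ) :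
    ∃ m, c ≤ m ∧ m ≤ c + j ∧ (m.choose j : R) ≠ 0 := by
  induction j with
  | zero => exact ⟨c, le_rfl, le_rfl, by simp⟩
  | succ j ih =>
    obtain ⟨m, hcm, hmc, hm⟩ := ih
    by_cases hm' : (m.choose (j + 1) : R) = 0
    · refine ⟨m + 1, by omega, by omega, ?_⟩
      rwa [Nat.choose_succ_succ, Nat.cast_add, hm', add_zero]
    · exact ⟨m, hcm, by omega, hm'⟩

lemma Pi.mem_span_setOf_single_iff {ι R : Type*} [Fintype ι] [DecidableEq ι] [Semiring R]
    {P : ι → Prop} {x : ι → R} :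
    x ∈ Submodule.span R {v | ∃ i, P i ∧ v = Pi.single i 1} ↔ ∀ i, x i ≠ 0 → P i := by
  refine ⟨fun hx => ?_, fun hx => ?_⟩
  · induction hx using Submodule.span_induction with
    | mem x h =>
      obtain ⟨i, hi, rfl⟩ := h
      intro k hk
      obtain rfl : k = i := by_contra fun hki => hk (Pi.single_eq_of_ne hki 1)
      exact hi
    | zero => simp
    | add x y _ _ hx hy =>
      intro k hk
      by_cases hxk : x k = 0
      · exact hy k (by simpa [hxk] using hk)
      · exact hx k hxk
    | smul a x _ hx => exact fun k hk => hx k (right_ne_zero_of_mul hk)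
  · rw [pi_eq_sum_univ' x]
    refine Submodule.sum_mem _ fun i _ => ?_
    by_cases hxi : x i = 0
    · simp [hxi]
    · exact Submodule.smul_mem _ _ (Submodule.subset_span ⟨i, hx i hxi, rfl⟩)

lemma sum_choose_mul_pow_mul_choose_mul_pow {R : Type*} [CommRing R] (u v : R) {s r N : ℕ}
    (hs : s < N) :
    ∑ t ∈ range N, (s.choose t : R) * u ^ (s - t) * ((t.choose r : R) * v ^ (t - r)) =
      s.choose r * (u + v) ^ (s - r) := by
  have h : ((X + C (u + v)) ^ s).coeff r = ((X + C v + C u) ^ s).coeff r := by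
    rw [C_add, add_assoc, add_comm (C u)]
  rw [coeff_X_add_C_pow, add_pow (X + C v), finsetSum_coeff] at h
  simp only [← C_pow, ← C_eq_natCast, coeff_mul_C, coeff_X_add_C_pow] at h
  rw [mul_comm, h, ← sum_subset (range_subset_range.mpr hs)]
  · exact sum_congr rfl fun t _ => by ring
  · intro t _ ht
    rw [Nat.choose_eq_zero_of_lt (by simpa using ht)]
    simp

section PascalMatrix

variable {R : Type*} [CommRing R] {n : ℕ}

def pascalMatrix (n : ℕ) (u : R) : Matrix (Fin n) (Fin n) R :=
  Matrix.of fun r s => (r.1.choose s.1 : R) * u ^ (r.1 - s.1)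

lemma pascalMatrix_mulVec_apply (u : R) (v : Fin n → R) (t : Fin n) :
    (pascalMatrix n u *ᵥ v) t = ∑ r, (t.1.choose r.1 : R) * u ^ (t.1 - r.1) * v r := by
  simp [pascalMatrix, Matrix.mulVec, dotProduct]

lemma pascalMatrix_mulVec_single_one (u : R) (s : Fin n) :
    pascalMatrix n u *ᵥ Pi.single s 1 = fun r => (r.1.choose s.1 : R) * u ^ (r.1 - s.1) := by
  ext r
  simp [pascalMatrix]

lemma pascalMatrix_mul (u v : R) :
    pascalMatrix n u * pascalMatrix n v = pascalMatrix n (u + v) := by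
  ext s r
  rw [Matrix.mul_apply]
  exact (Fin.sum_univ_eq_sum_range
    (fun t => (s.1.choose t : R) * u ^ (s.1 - t) * ((t.choose r.1 : R) * v ^ (t - r.1))) n).trans
    (sum_choose_mul_pow_mul_choose_mul_pow u v s.isLt)

lemma pascalMatrix_zero : pascalMatrix n (0 : R) = 1 := by
  ext s r
  rcases lt_trichotomy s r with h | rfl | h
  · simp [pascalMatrix, h.ne, Nat.choose_eq_zero_of_lt (Fin.lt_def.mp h)]
  · simp [pascalMatrix]
  · simp [pascalMatrix, h.ne', zero_pow (Nat.sub_ne_zero_of_lt h)]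

lemma pascalMatrix_neg_mulVec_pascalMatrix_mulVec (u : R) (v : Fin n → R) :
    pascalMatrix n (-u) *ᵥ (pascalMatrix n u *ᵥ v) = v := by
  rw [Matrix.mulVec_mulVec, pascalMatrix_mul, neg_add_cancel, pascalMatrix_zero, Matrix.one_mulVec]

end PascalMatrix

lemma mem_oscSub_iff {F : Type} [Field F] {n c : ℕ} {u : F} {v : Fin (n + 1) → F} :
    v ∈ oscSub F n u c ↔
      ∀ t : Fin (n + 1), c ≤ t.1 → (pascalMatrix (n + 1) (-u) *ᵥ v) t = 0 := by
  refine ⟨fun hv => ?_, fun hv => ?_⟩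
  · induction hv using Submodule.span_induction with
    | mem x h =>
      obtain ⟨s, rfl⟩ := h
      intro t ht
      by_cases hs : s.1 < n + 1
      · beta_reduce
        rw [← pascalMatrix_mulVec_single_one u ⟨s, hs⟩,
          pascalMatrix_neg_mulVec_pascalMatrix_mulVec]
        exact Pi.single_eq_of_ne (Fin.ne_of_val_ne (by simp only; omega)) 1
      · have hcol : (fun r : Fin (n + 1) => (r.1.choose s.1 : F) * u ^ (r.1 - s.1)) = 0 := by
          ext r
          simp [Nat.choose_eq_zero_of_lt (show r.1 < s.1 by omega)]
        simp [hcol]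
    | zero => simp
    | add x y _ _ hx hy => exact fun t ht => by simp [mulVec_add, hx t ht, hy t ht]
    | smul a x _ hx => exact fun t ht => by simp [mulVec_smul, hx t ht]
  · rw [← pascalMatrix_neg_mulVec_pascalMatrix_mulVec (-u) v, neg_neg,
      pi_eq_sum_univ' (pascalMatrix (n + 1) (-u) *ᵥ v), mulVec_sum]
    refine Submodule.sum_mem _ fun s _ => ?_
    by_cases hs : s.1 < c
    · rw [mulVec_smul, pascalMatrix_mulVec_single_one]
      exact Submodule.smul_mem _ _ (Submodule.subset_span ⟨⟨s, hs⟩, rfl⟩)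
    · simp [hv s (not_lt.mp hs)]

lemma choose_mul_eq_zero_of_pascalMatrix_mulVec_eq_zero {F : Type*} [Field F] {n c : ℕ}
    (hF : (c : Cardinal) ≤ Cardinal.mk F) {v : Fin n → F} {m : Fin n}
    (hsupp : ∀ r, v r ≠ 0 → m.1 < r.1 + c) (hrow : ∀ x, (pascalMatrix n x *ᵥ v) m = 0)
    (j : Fin n) : (m.1.choose j.1 : F) * v j = 0 := by
  set p : F[X] := ∑ r, C ((m.1.choose r.1 : F) * v r) * X ^ (m.1 - r.1) with hp
  have hdeg : p.natDegree ≤ c - 1 := by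
    refine natDegree_sum_le_of_forall_le _ _ fun r _ => ?_
    by_cases hr : v r = 0
    · simp [hr]
    · exact (natDegree_C_mul_X_pow_le _ _).trans (by have := hsupp r hr; omega)
  have hcard : ((c - 1 : ℕ) : Cardinal) < Cardinal.mk F := by
    rcases Nat.eq_zero_or_pos c with rfl | hc
    · exact pos_iff_ne_zero.mpr (Cardinal.mk_ne_zero F)
    · exact (Nat.cast_lt.mpr (Nat.sub_lt hc one_pos)).trans_le hF
  have hp0 : p = 0 := by
    refine eq_zero_of_forall_eval_zero_of_natDegree_lt_card p (fun x => ?_)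
      ((Nat.cast_le.mpr hdeg).trans_lt hcard)
    rw [← hrow x, pascalMatrix_mulVec_apply, hp, eval_finsetSum]
    exact sum_congr rfl fun r _ => by simp only [eval_mul, eval_C, eval_pow, eval_X]; ring
  rcases lt_or_ge m.1 j.1 with hmj | hjm
  · simp [Nat.choose_eq_zero_of_lt hmj]
  have hcoeff := congrArg (coeff · (m.1 - j.1)) hp0
  simp only [hp, finsetSum_coeff, coeff_C_mul_X_pow, coeff_zero] at hcoeff
  rwa [sum_eq_single j (fun r _ hrj => ?_) (by simp), if_pos rfl] at hcoeff
  rcases lt_or_ge m.1 r.1 with hmr | hrm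
  · simp [Nat.choose_eq_zero_of_lt hmr]
  · exact if_neg fun h => hrj (Fin.ext (by omega))

theorem nucleus_eq_span_general (F : Type) [Field F] (n c : ℕ)
    (hF : (c : Cardinal) ≤ Cardinal.mk F) :
    nucleus F n c = Submodule.span F
      {v | ∃ j : Fin (n + 1),
        (∀ m : ℕ, c ≤ m → m ≤ n → (Nat.choose m j.1 : F) = 0) ∧ v = Pi.single j 1} := by
  ext v
  simp only [nucleus, oscInfty, Submodule.mem_inf, Submodule.mem_iInf, mem_oscSub_iff,
    Pi.mem_span_setOf_single_iff]
  constructor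
  · rintro ⟨hosc, hinfty⟩ j hj m hcm hmn
    by_contra hm
    have hsupp : ∀ r : Fin (n + 1), v r ≠ 0 → m < r.1 + c := fun r hr => by
      have := hinfty r hr; omega
    refine hj ((mul_eq_zero.mp ?_).resolve_left hm)
    exact choose_mul_eq_zero_of_pascalMatrix_mulVec_eq_zero (m := ⟨m, by omega⟩) hF hsupp
      (fun x => by simpa using hosc (-x) ⟨m, by omega⟩ hcm) j
  · intro hv
    refine ⟨fun u t ht => ?_, fun i hi => ?_⟩
    · rw [pascalMatrix_mulVec_apply]
      refine sum_eq_zero fun r _ => ?_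
      by_cases hr : v r = 0
      · simp [hr]
      · simp [hv r hr t ht (by omega)]
    · obtain ⟨m, hcm, hmi, hm⟩ := exists_cast_choose_ne_zero (R := F) c i
      by_contra hin
      exact hm (hv i hi m hcm (by omega))

/-- If `#F ≥ k+1` (i.e. `#F ≥ c` with `c = k+1`), the `k`-nucleus of the normal rational
curve equals the span of those standard basis vectors `c_j` with
`C(k+1,j) ≡ C(k+2,j) ≡ … ≡ C(n,j) ≡ 0 mod char F` (vanishing of the binomial
coefficients in `F`). -/
theorem nucleus_eq_span (F : Type) [Field F] (n c : ℕ) (hn : 2 ≤ n) (hc : c ≤ n)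
    (hF : (c : Cardinal) ≤ Cardinal.mk F) :
    nucleus F n c = Submodule.span F
      {v | ∃ j : Fin (n + 1),
        (∀ m : ℕ, c ≤ m → m ≤ n → (Nat.choose m j.1 : F) = 0) ∧ v = Pi.single j 1} :=
  nucleus_eq_span_general F n c hF
end

section
/- Let F be a field of characteristic p > 0 with #F ≥ n and n ≥ 2. The smallest non-empty nucleus of the normal rational curve V_1^n is a single point if and only if n = 2p^i − 2 for some i ∈ ℕ; in that case this point is F·c_{p^i − 1}. -/
/-!
Write `P(u)` for the matrix `(C(r, s) u^(r-s))`; the osculating subspace at `u` is spanned by its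
first `c` columns, and `P(x) P(y) = P(x + y)`. Pairing with the rows of `P(-u)` shows, via a
polynomial of degree `< c ≤ #F` vanishing on all of `F`, that the `c`-nucleus is the coordinate
subspace on the indices `j` with `p ∣ C(m, j)` for all `c ≤ m ≤ n`; these index sets grow with `c`,
so the smallest non-zero nucleus is the one for the least `c` with a non-empty index set.

By Kummer's theorem `p ∤ C(m, j)` iff `j mod pⁱ ≤ m mod pⁱ` for every `i`. If the least non-empty
index set is `{j}` for `c + 1`, write `pⁱ ∥ j + 1`: raising digit `i` of `j` keeps it in the set,
so `n < j + pⁱ`, and every `m` with `p ∤ C(m, j)` has `pⁱ ∣ m + 1`. This forces `c = j`,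
`j + 1 = pⁱ` and `n + 2 = 2pⁱ`. Conversely, for `n = 2pⁱ - 2` the index `pⁱ - 1` is the only one
that survives for `c ≤ pⁱ`, and it does so exactly from `c = pⁱ` on.
-/

open Finset Polynomial

theorem exists_cast_choose_add_ne_zero {R : Type*} [Ring R] [Nontrivial R] (c j : ℕ) :
    ∃ k ≤ j, ((c + k).choose j : R) ≠ 0 := by
  by_contra! h
  -- the `j`-th forward difference of `x ↦ C(x, j)` is the constant `1`
  have hΔ : (fwdDiff 1)^[j] (fun x ↦ x.choose j : ℕ → ℤ) c = 1 := by
    simpa using congr_fun (fwdDiff_iter_choose 0 j) c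
  rw [fwdDiff_iter_eq_sum_shift] at hΔ
  have := congrArg (Int.cast : ℤ → R) hΔ
  rw [Int.cast_sum, sum_eq_zero fun k hk => ?_, Int.cast_one] at this
  · exact zero_ne_one this
  · simp [h k (Nat.lt_succ_iff.mp (mem_range.mp hk))]

namespace Nat

theorem add_le_of_dvd_of_lt {n a b : ℕ} (ha : n ∣ a) (hb : n ∣ b) (h : a < b) : a + n ≤ b := by
  by_contra! h'
  exact h.not_ge (le_of_lt_add_of_dvd h' hb ha)

theorem dvd_add_one_iff_mod_eq_sub_one {q x : ℕ} (hq : 0 < q) : q ∣ x + 1 ↔ x % q = q - 1 := by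
  have hx := div_add_mod x q
  have hlt := mod_lt x hq
  refine ⟨fun h => ?_, fun h => ⟨x / q + 1, by rw [Nat.mul_add]; omega⟩⟩
  have : q ∣ x % q + 1 :=
    (Nat.dvd_add_right (dvd_mul_right q (x / q))).mp (by rwa [← add_assoc, hx])
  have := le_of_dvd (by omega) this
  omega

/-- Adding `p ^ i` to `j` only raises the base-`p` digit `i` of `j`, which is not `p - 1`. -/
theorem mod_pow_le_mod_pow_add_pow {p i j : ℕ} (hp : 0 < p) (hi : p ^ i ∣ j + 1)
    (hi' : ¬ p ^ (i + 1) ∣ j + 1) (k : ℕ) : j % p ^ k ≤ (j + p ^ i) % p ^ k := by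
  rcases le_or_gt k i with hki | hik
  · obtain ⟨t, ht⟩ := pow_dvd_pow p hki
    rw [ht, add_mul_mod_self_left]
  · have hj := div_add_mod j (p ^ k)
    have hr : p ^ i ∣ j % p ^ k + 1 :=
      (Nat.dvd_add_right ((pow_dvd_pow p hik.le).mul_right _)).mp (by rwa [← add_assoc, hj])
    have hr' : j % p ^ k + 1 ≠ p ^ k := fun h =>
      hi' ((pow_dvd_pow p hik).trans ⟨j / p ^ k + 1, by rw [Nat.mul_add]; omega⟩)
    have hlt : j % p ^ k + 1 + p ^ i ≤ p ^ k :=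
      add_le_of_dvd_of_lt hr (pow_dvd_pow p hik.le)
        (lt_of_le_of_ne (mod_lt j (pow_pos hp k)) hr')
    have hsplit : j + p ^ i = p ^ k * (j / p ^ k) + (j % p ^ k + p ^ i) := by omega
    rw [hsplit, mul_add_mod, mod_eq_of_lt (show j % p ^ k + p ^ i < p ^ k by omega)]
    exact le_add_right _ _

namespace Prime

variable {p : ℕ}

/-- Kummer's theorem: `p ∤ C(m, j)` iff adding `j` and `m - j` in base `p` has no carry, i.e.
iff every truncation `j mod pⁱ` is at most `m mod pⁱ`. -/
theorem not_dvd_choose_iff (hp : p.Prime) {m j : ℕ} :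
    ¬ p ∣ m.choose j ↔ ∀ i, j % p ^ i ≤ m % p ^ i := by
  have := Fact.mk hp
  rcases le_or_gt j m with hjm | hmj
  · have carry : ∀ i, p ^ i ≤ j % p ^ i + (m - j) % p ^ i ↔ m % p ^ i < j % p ^ i := fun i => by
      have h := add_mod_add_ite j (m - j) (p ^ i)
      rw [Nat.add_sub_cancel' hjm] at h
      have := mod_lt (m - j) (pow_pos hp.pos i)
      generalize (m - j) % p ^ i = b at *
      split_ifs at h <;> omega
    rw [dvd_iff_padicValNat_ne_zero (choose_pos hjm).ne', not_not,
      padicValNat_choose hjm (lt_succ_self _), Finset.card_eq_zero, filter_eq_empty_iff]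
    simp only [carry, not_lt, mem_Ico]
    refine ⟨fun h i => ?_, fun h i _ => h i⟩
    rcases Nat.eq_zero_or_pos i with rfl | hi
    · simp [Nat.mod_one]
    by_cases hilog : i < log p m + 1
    · exact h ⟨hi, hilog⟩
    rw [mod_eq_of_lt (a := m) (lt_pow_of_log_lt hp.one_lt (by omega))]
    exact (mod_le j _).trans hjm
  · simp only [choose_eq_zero_of_lt hmj, dvd_zero, not_true_eq_false, false_iff, not_forall,
      not_le]
    exact ⟨j, by rw [mod_eq_of_lt (Nat.lt_pow_self hp.one_lt)]; exact (mod_le m _).trans_lt hmj⟩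

theorem pow_dvd_add_one_of_not_dvd_choose (hp : p.Prime) {i j m : ℕ} (hj : p ^ i ∣ j + 1)
    (h : ¬ p ∣ m.choose j) : p ^ i ∣ m + 1 := by
  have hq := pow_pos hp.pos i
  rw [dvd_add_one_iff_mod_eq_sub_one hq] at hj ⊢
  have h1 := hp.not_dvd_choose_iff.mp h i
  have h2 := mod_lt m hq
  omega

theorem dvd_choose_add_pow_of_dvd_choose (hp : p.Prime) {i j m : ℕ} (hi : p ^ i ∣ j + 1)
    (hi' : ¬ p ^ (i + 1) ∣ j + 1) (h : p ∣ m.choose j) : p ∣ m.choose (j + p ^ i) := by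
  by_contra h'
  exact hp.not_dvd_choose_iff.mpr
    (fun k => (mod_pow_le_mod_pow_add_pow hp.pos hi hi' k).trans (hp.not_dvd_choose_iff.mp h' k)) h

end Prime

end Nat

section Support

variable {p n c j : ℕ}

theorem lt_add_pow_of_forall_dvd_choose_iff (hp : p.Prime) {i : ℕ} (hi : p ^ i ∣ j + 1)
    (hi' : ¬ p ^ (i + 1) ∣ j + 1) (hj : j ≤ n)
    (hsupp : ∀ j' ≤ n, (∀ m, c ≤ m → m ≤ n → p ∣ m.choose j') ↔ j' = j) : n < j + p ^ i := by
  by_contra! h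
  have := (hsupp (j + p ^ i) h).mp fun m hm hmn =>
    hp.dvd_choose_add_pow_of_dvd_choose hi hi' ((hsupp j hj).mpr rfl m hm hmn)
  have := pow_pos hp.pos i
  omega

theorem eq_of_forall_dvd_choose_iff (hp : p.Prime) (hj : j ≤ n)
    (hsupp : ∀ j' ≤ n, (∀ m, c + 1 ≤ m → m ≤ n → p ∣ m.choose j') ↔ j' = j)
    (hnot : ¬ ∀ m, c ≤ m → m ≤ n → p ∣ m.choose j) : c = j := by
  obtain ⟨i, hi, hi'⟩ : ∃ i, p ^ i ∣ j + 1 ∧ ¬ p ^ (i + 1) ∣ j + 1 :=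
    ⟨_, Nat.ordProj_dvd _ _, Nat.pow_succ_factorization_not_dvd (Nat.succ_ne_zero j) hp⟩
  obtain ⟨m, hcm, hmn, hm⟩ : ∃ m, c ≤ m ∧ m ≤ n ∧ ¬ p ∣ m.choose j := by
    push Not at hnot
    exact hnot
  obtain rfl : m = c := by
    by_contra hne
    exact hm ((hsupp j hj).mpr rfl m (by omega) hmn)
  have hjm : j ≤ m := by
    by_contra! h
    exact hm (by rw [Nat.choose_eq_zero_of_lt h]; exact dvd_zero p)
  have := lt_add_pow_of_forall_dvd_choose_iff hp hi hi' hj hsupp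
  by_contra hne
  have := Nat.add_le_of_dvd_of_lt hi (hp.pow_dvd_add_one_of_not_dvd_choose hi hm)
    (show j + 1 < m + 1 by omega)
  omega

theorem exists_add_two_eq_two_mul_pow (hp : p.Prime) (hj : j ≤ n)
    (hsupp : ∀ j' ≤ n, (∀ m, j + 1 ≤ m → m ≤ n → p ∣ m.choose j') ↔ j' = j) :
    ∃ i, n + 2 = 2 * p ^ i := by
  obtain ⟨i, hi, hi'⟩ : ∃ i, p ^ i ∣ j + 1 ∧ ¬ p ^ (i + 1) ∣ j + 1 :=
    ⟨_, Nat.ordProj_dvd _ _, Nat.pow_succ_factorization_not_dvd (Nat.succ_ne_zero j) hp⟩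
  refine ⟨i, ?_⟩
  have hnj := lt_add_pow_of_forall_dvd_choose_iff hp hi hi' hj hsupp
  have hpos := pow_pos hp.pos i
  have hother : ∀ j' ≤ n, j' ≠ j → ∃ m, j + 1 ≤ m ∧ m ≤ n ∧ ¬ p ∣ m.choose j' := by
    intro j' hj' hne
    by_contra! h
    exact hne ((hsupp j' hj').mp h)
  have hji : j + 1 = p ^ i := by
    by_contra hne
    have : p ^ i < j + 1 := lt_of_le_of_ne (Nat.le_of_dvd (by omega) hi) (Ne.symm hne)
    obtain ⟨m, hm, hmn, hndvd⟩ := hother (p ^ i - 1) (by omega) (by omega)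
    have := Nat.add_le_of_dvd_of_lt hi
      (hp.pow_dvd_add_one_of_not_dvd_choose (by rw [Nat.sub_add_cancel hpos]) hndvd)
      (show j + 1 < m + 1 by omega)
    omega
  by_contra hne
  obtain ⟨m, hm, hmn, hndvd⟩ := hother (n + 1 - p ^ i) (by omega) (by omega)
  have := hp.not_dvd_choose_iff.mp hndvd i
  rw [Nat.mod_eq_of_lt (show n + 1 - p ^ i < p ^ i by omega),
    Nat.mod_eq_sub_mod (show p ^ i ≤ m by omega),
    Nat.mod_eq_of_lt (show m - p ^ i < p ^ i by omega)] at this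
  omega

theorem dvd_choose_pow_sub_one (hp : p.Prime) {i m : ℕ} (hn : n + 2 = 2 * p ^ i)
    (hm : p ^ i ≤ m) (hmn : m ≤ n) : p ∣ m.choose (p ^ i - 1) := by
  by_contra h
  have hq := pow_pos hp.pos i
  have := Nat.add_le_of_dvd_of_lt dvd_rfl
    (hp.pow_dvd_add_one_of_not_dvd_choose (by rw [Nat.sub_add_cancel hq]) h)
    (show p ^ i < m + 1 by omega)
  omega

theorem eq_pow_sub_one_of_forall_dvd_choose (hp : p.Prime) {i : ℕ}
    (hn : n + 2 = 2 * p ^ i) (hc : c ≤ p ^ i) (hj : j ≤ n)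
    (h : ∀ m, c ≤ m → m ≤ n → p ∣ m.choose j) : j = p ^ i - 1 := by
  have := Fact.mk hp
  have hjq : j < p ^ i := by
    by_contra! hqj
    exact hp.not_dvd_one (by simpa using h j (by omega) hj)
  by_contra hne
  obtain ⟨k, hk, hck⟩ := exists_cast_choose_add_ne_zero (R := ZMod p) c j
  exact hck ((CharP.cast_eq_zero_iff (ZMod p) p _).mpr (h (c + k) (by omega) (by omega)))

end Support

theorem sum_choose_mul_pow_mul_choose_mul_pow_s14 {R : Type*} [CommSemiring R] (x y : R)
    {m j N : ℕ} (hm : m ≤ N) :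
    ∑ s ∈ range (N + 1), (m.choose s : R) * x ^ (m - s) * ((s.choose j : R) * y ^ (s - j)) =
      m.choose j * (x + y) ^ (m - j) := by
  rcases lt_or_ge m j with hmj | hjm
  · rw [Nat.choose_eq_zero_of_lt hmj, Nat.cast_zero, zero_mul]
    refine sum_eq_zero fun s _ => ?_
    rcases lt_or_ge m s with hms | hsm
    · simp [Nat.choose_eq_zero_of_lt hms]
    · simp [Nat.choose_eq_zero_of_lt (hsm.trans_lt hmj)]
  have hvanish : ∀ s ∈ range (N + 1), s ∉ Ico j (m + 1) →
      (m.choose s : R) * x ^ (m - s) * ((s.choose j : R) * y ^ (s - j)) = 0 := by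
    intro s _ hs
    rcases lt_or_ge s j with hsj | hjs
    · simp [Nat.choose_eq_zero_of_lt hsj]
    · simp only [mem_Ico, not_and, not_lt] at hs
      simp [Nat.choose_eq_zero_of_lt (show m < s by omega)]
  rw [← sum_subset (fun s hs => by simp only [mem_Ico, mem_range] at hs ⊢; omega) hvanish,
    sum_Ico_eq_sum_range, add_comm x y, add_pow, mul_sum, show m + 1 - j = m - j + 1 by omega]
  refine sum_congr rfl fun t _ => ?_
  have hchoose := Nat.choose_mul (n := m) (Nat.le_add_right j t)
  rw [Nat.add_sub_cancel_left] at hchoose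
  rw [Nat.add_sub_cancel_left, show m - (j + t) = m - j - t by omega]
  calc _ = ((m.choose (j + t) * (j + t).choose j : ℕ) : R) * (x ^ (m - j - t) * y ^ t) := by
        push_cast; ring
    _ = _ := by rw [hchoose]; push_cast; ring

/-- The matrices `P(u) = (C(r, s) u^(r-s))` satisfy `P(u) P(-u) = 1`. -/
theorem sum_choose_mul_pow_mul_choose_mul_neg_pow {R : Type*} [CommRing R] (u : R)
    {m j N : ℕ} (hm : m ≤ N) :
    ∑ s ∈ range (N + 1), (m.choose s : R) * u ^ (m - s) * ((s.choose j : R) * (-u) ^ (s - j)) =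
      if m = j then 1 else 0 := by
  rw [sum_choose_mul_pow_mul_choose_mul_pow_s14 u (-u) hm, add_neg_cancel]
  rcases lt_trichotomy m j with h | rfl | h
  · simp [Nat.choose_eq_zero_of_lt h, h.ne]
  · simp
  · simp [h.ne', zero_pow (Nat.sub_ne_zero_of_lt h)]

section Nucleus

variable {F : Type} [Field F] {n c : ℕ}

def nucleusSupport (F : Type) [Field F] (n c : ℕ) : Set (Fin (n + 1)) :=
  {j | ∀ m, c ≤ m → m ≤ n → (m.choose j : F) = 0}

theorem nucleusSupport_mono : Monotone (nucleusSupport F n) :=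
  fun _ _ hcc' _ hj m hm hmn => hj m (hcc'.trans hm) hmn

theorem nucleusSupport_subset :
    nucleusSupport F n c ⊆ {i : Fin (n + 1) | n + 1 ≤ (i : ℕ) + c} := by
  intro j hj
  by_contra! hjc
  obtain ⟨k, hk, hck⟩ := exists_cast_choose_add_ne_zero (R := F) c j
  exact hck (hj (c + k) (Nat.le_add_right c k) (by simp only [Set.mem_ofPred_eq] at hjc; omega))

theorem oscInfty_eq_spanSubset :
    oscInfty F n c = Pi.spanSubset F {i : Fin (n + 1) | n + 1 ≤ (i : ℕ) + c} := by
  rw [oscInfty, Pi.spanSubset]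
  congr 1
  ext v
  simp [eq_comm]

theorem single_mem_oscSub (hc : c ≤ n) (u : F) {j : Fin (n + 1)} (hj : j ∈ nucleusSupport F n c) :
    Pi.single j 1 ∈ oscSub F n u c := by
  -- `e_j` is `P(u)` applied to column `j` of `P(-u)`, whose entries in rows `s ≥ c` vanish
  have hcomb : Pi.single j 1 = ∑ s : Fin c, ((s : ℕ).choose j * (-u) ^ ((s : ℕ) - j) : F) •
      fun r : Fin (n + 1) => ((r : ℕ).choose s : F) * u ^ ((r : ℕ) - s) := by
    ext r
    simp only [Finset.sum_apply, Pi.smul_apply, smul_eq_mul]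
    rw [sum_congr rfl fun _ _ => mul_comm _ _, Fin.sum_univ_eq_sum_range
        (fun s => ((r : ℕ).choose s : F) * u ^ ((r : ℕ) - s) * (s.choose j * (-u) ^ (s - j))) c,
      sum_subset (range_subset_range.mpr (hc.trans n.le_succ)) fun s hs hsc => by
        simp [hj s (by simpa using hsc) (by simpa [Nat.lt_succ_iff] using hs)],
      sum_choose_mul_pow_mul_choose_mul_neg_pow u (Nat.lt_succ_iff.mp r.2), Pi.single_apply]
    exact if_congr Fin.ext_iff rfl rfl
  rw [hcomb]
  exact sum_mem fun s _ => Submodule.smul_mem _ _ (Submodule.subset_span ⟨s, rfl⟩)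

theorem spanSubset_nucleusSupport_le_nucleus (hc : c ≤ n) :
    Pi.spanSubset F (nucleusSupport F n c) ≤ nucleus F n c := by
  refine le_inf (le_iInf fun u => ?_) ?_
  · rw [Pi.spanSubset, Submodule.span_le]
    rintro _ ⟨j, hj, rfl⟩
    simpa using single_mem_oscSub hc u hj
  · rw [oscInfty_eq_spanSubset]
    exact Submodule.span_mono (Set.image_mono (nucleusSupport_subset (F := F)))

theorem sum_choose_mul_pow_mul_eq_zero_of_mem_oscSub {m : ℕ} (hcm : c ≤ m) (hmn : m ≤ n) (z : F)
    {w : Fin (n + 1) → F} (hw : w ∈ oscSub F n (-z) c) :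
    ∑ r : Fin (n + 1), (m.choose r : F) * z ^ (m - r) * w r = 0 := by
  have hker : oscSub F n (-z) c ≤ LinearMap.ker
      (dotProductBilin F F fun r : Fin (n + 1) => (m.choose r : F) * z ^ (m - r)) := by
    rw [oscSub, Submodule.span_le]
    rintro _ ⟨s, rfl⟩
    simp only [SetLike.mem_coe, LinearMap.mem_ker, dotProductBilin_apply_apply, dotProduct]
    exact (Fin.sum_univ_eq_sum_range (fun r => _) _).trans
      ((sum_choose_mul_pow_mul_choose_mul_neg_pow z hmn).trans (if_neg (by omega)))
  simpa [dotProduct] using hker hw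

theorem mem_nucleusSupport_of_apply_ne_zero (hF : (n : Cardinal) ≤ Cardinal.mk F)
    {v : Fin (n + 1) → F} (hv : v ∈ nucleus F n c) {r : Fin (n + 1)} (hr : v r ≠ 0) :
    r ∈ nucleusSupport F n c := by
  obtain ⟨hsub, hinf⟩ := Submodule.mem_inf.mp hv
  rw [oscInfty_eq_spanSubset, Pi.mem_spanSubset_iff] at hinf
  have hlow : ∀ i : Fin (n + 1), v i ≠ 0 → n + 1 ≤ (i : ℕ) + c :=
    fun i hi => by_contra fun h => hi (hinf i h)
  intro m hcm hmn
  rcases lt_or_ge m r with hmr | hrm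
  · simp [Nat.choose_eq_zero_of_lt hmr]
  set Q : F[X] := ∑ i : Fin (n + 1), C ((m.choose i : F) * v i) * X ^ (m - i)
  have hQ0 : Q = 0 := by
    refine eq_zero_of_forall_eval_zero_of_natDegree_lt_card Q (fun z => ?_) ?_
    · rw [← sum_choose_mul_pow_mul_eq_zero_of_mem_oscSub hcm hmn z
        (Submodule.mem_iInf _ |>.mp hsub (-z))]
      simp only [Q, eval_finsetSum, eval_mul, eval_C, eval_pow, eval_X]
      exact sum_congr rfl fun _ _ => by ring
    · have hdeg : Q.natDegree ≤ c - 1 := natDegree_sum_le_of_forall_le _ _ fun i _ => by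
        by_cases hvi : v i = 0
        · simp [hvi]
        · exact (natDegree_C_mul_X_pow_le _ _).trans (by have := hlow i hvi; omega)
      have := hlow r hr
      have := r.2
      exact (Nat.cast_lt.mpr (show Q.natDegree < n by omega)).trans_le hF
  have hcoeff : Q.coeff (m - r) = m.choose r * v r := by
    simp only [Q, finsetSum_coeff, coeff_C_mul_X_pow]
    rw [sum_eq_single r (fun i _ hir => ?_) (by simp), if_pos rfl]
    rcases le_or_gt (i : ℕ) m with him | hmi
    · exact if_neg fun h => hir (Fin.ext (by omega))
    · simp [Nat.choose_eq_zero_of_lt hmi]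
  rw [hQ0, coeff_zero] at hcoeff
  exact (mul_eq_zero.mp hcoeff.symm).resolve_right hr

theorem nucleus_eq_spanSubset (hF : (n : Cardinal) ≤ Cardinal.mk F) (hc : c ≤ n) :
    nucleus F n c = Pi.spanSubset F (nucleusSupport F n c) :=
  le_antisymm
    (fun _ hv => Pi.mem_spanSubset_iff.mpr fun _ hr =>
      by_contra fun hvr => hr (mem_nucleusSupport_of_apply_ne_zero hF hv hvr))
    (spanSubset_nucleusSupport_le_nucleus hc)

theorem Pi.spanSubset_eq_bot_iff {R ι : Type*} [Semiring R] [Nontrivial R] [Finite ι]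
    {s : Set ι} : Pi.spanSubset R s = ⊥ ↔ s = ∅ := by
  simp [Pi.spanSubset, Submodule.span_eq_bot, Set.eq_empty_iff_forall_notMem,
    (Pi.basisFun R ι).ne_zero]

theorem nucleus_ne_bot_iff (hF : (n : Cardinal) ≤ Cardinal.mk F) (hc : c ≤ n) :
    nucleus F n c ≠ ⊥ ↔ (nucleusSupport F n c).Nonempty := by
  rw [nucleus_eq_spanSubset hF hc, Ne, Pi.spanSubset_eq_bot_iff, Set.nonempty_iff_ne_empty]

theorem sInf_nonzero_nuclei_eq (hF : (n : Cardinal) ≤ Cardinal.mk F) {c₁ : ℕ}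
    (h : IsLeast {c | c ≤ n ∧ (nucleusSupport F n c).Nonempty} c₁) :
    sInf {N : Submodule F (Fin (n + 1) → F) | (∃ c ≤ n, N = nucleus F n c) ∧ N ≠ ⊥} =
      nucleus F n c₁ := by
  obtain ⟨⟨hc₁n, hne⟩, hleast⟩ := h
  refine le_antisymm (sInf_le ⟨⟨c₁, hc₁n, rfl⟩, (nucleus_ne_bot_iff hF hc₁n).mpr hne⟩)
    (le_sInf ?_)
  rintro _ ⟨⟨c, hc, rfl⟩, hbot⟩
  rw [nucleus_eq_spanSubset hF hc₁n, nucleus_eq_spanSubset hF hc]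
  exact Submodule.span_mono
    (Set.image_mono (nucleusSupport_mono (hleast ⟨hc, (nucleus_ne_bot_iff hF hc).mp hbot⟩)))

end Nucleus

section CharP

variable {F : Type} [Field F] {p n : ℕ}

theorem mem_nucleusSupport_iff_dvd (p : ℕ) [CharP F p] {c : ℕ} {j : Fin (n + 1)} :
    j ∈ nucleusSupport F n c ↔ ∀ m, c ≤ m → m ≤ n → p ∣ m.choose j := by
  simp only [nucleusSupport, Set.mem_ofPred_eq, CharP.cast_eq_zero_iff F p]

theorem nucleusSupport_pow_eq_singleton (hp : p.Prime) [CharP F p] {i : ℕ}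
    (hn : n + 2 = 2 * p ^ i) :
    nucleusSupport F n (p ^ i) = {⟨p ^ i - 1, by omega⟩} := by
  ext j
  rw [mem_nucleusSupport_iff_dvd p, Set.mem_singleton_iff, Fin.ext_iff]
  refine ⟨eq_pow_sub_one_of_forall_dvd_choose hp hn le_rfl (Nat.lt_succ_iff.mp j.2), ?_⟩
  intro hj m hm hmn
  rw [hj]
  exact dvd_choose_pow_sub_one hp hn hm hmn

theorem isLeast_nonempty_nucleusSupport (hp : p.Prime) [CharP F p] {i : ℕ}
    (hn : n + 2 = 2 * p ^ i) (hn0 : 0 < n) :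
    IsLeast {c | c ≤ n ∧ (nucleusSupport F n c).Nonempty} (p ^ i) := by
  refine ⟨⟨by omega, by simp [nucleusSupport_pow_eq_singleton hp hn]⟩, fun c ⟨_, j, hj⟩ => ?_⟩
  by_contra! hcq
  rw [mem_nucleusSupport_iff_dvd p] at hj
  have hj1 := eq_pow_sub_one_of_forall_dvd_choose hp hn hcq.le (Nat.lt_succ_iff.mp j.2) hj
  exact hp.not_dvd_one (by simpa using hj j (by omega) (Nat.lt_succ_iff.mp j.2))

theorem exists_add_two_eq_two_mul_pow_of_isLeast (hp : p.Prime) [CharP F p] {c₁ : ℕ}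
    (h : IsLeast {c | c ≤ n ∧ (nucleusSupport F n c).Nonempty} c₁)
    (h1 : (nucleusSupport F n c₁).ncard = 1) : ∃ i, n + 2 = 2 * p ^ i := by
  obtain ⟨j, hj⟩ := Set.ncard_eq_one.mp h1
  have hjn : (j : ℕ) ≤ n := Nat.lt_succ_iff.mp j.2
  obtain ⟨c, rfl⟩ : ∃ c, c₁ = c + 1 := by
    refine Nat.exists_eq_add_one.mpr (Nat.pos_of_ne_zero fun h0 => ?_)
    have : j ∈ nucleusSupport F n c₁ := hj ▸ rfl
    exact hp.not_dvd_one (by simpa using (mem_nucleusSupport_iff_dvd p).mp this j (by omega) hjn)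
  have hsupp : ∀ j' ≤ n, (∀ m, c + 1 ≤ m → m ≤ n → p ∣ m.choose j') ↔ j' = j := fun j' hj' => by
    simpa [mem_nucleusSupport_iff_dvd p, Fin.ext_iff] using
      congrArg ((⟨j', Nat.lt_succ_of_le hj'⟩ : Fin (n + 1)) ∈ ·) hj
  have hnot : ¬ ∀ m, c ≤ m → m ≤ n → p ∣ m.choose j := fun hjc => by
    have := h.2 ⟨by have := h.1.1; omega, j, (mem_nucleusSupport_iff_dvd p).mpr hjc⟩
    omega
  obtain rfl := eq_of_forall_dvd_choose_iff hp hjn hsupp hnot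
  exact exists_add_two_eq_two_mul_pow hp hjn hsupp

end CharP

/-- Over a field of characteristic `p > 0` with `#F ≥ n` and `n ≥ 2`, the smallest
non-empty nucleus of the normal rational curve `V_1^n` (the infimum of all non-zero
`k`-nuclei, `k ∈ {−1,…,n−1}`, i.e. `c = k+1 ∈ {0,…,n}`) is a single projective point
(vector-space dimension `1`) if and only if `n = 2pⁱ − 2` for some `i ∈ ℕ`; and in that
case this point is `F·c_{pⁱ−1}`. -/
theorem smallest_nucleus_point (F : Type) [Field F] (p : ℕ) (hp : p.Prime) [CharP F p]
    (n : ℕ) (hn : 2 ≤ n) (hF : (n : Cardinal) ≤ Cardinal.mk F) :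
    (Module.finrank F
        ↥(sInf {N : Submodule F (Fin (n + 1) → F) | (∃ c ≤ n, N = nucleus F n c) ∧ N ≠ ⊥}) = 1
      ↔ ∃ i : ℕ, n = 2 * p ^ i - 2) ∧
    ∀ i : ℕ, ∀ _h2pi : n = 2 * p ^ i - 2,
      sInf {N : Submodule F (Fin (n + 1) → F) | (∃ c ≤ n, N = nucleus F n c) ∧ N ≠ ⊥}
        = Submodule.span F {Pi.single (⟨p ^ i - 1, by omega⟩ : Fin (n + 1)) 1} := by
  have hspecial : ∀ i (hi : n = 2 * p ^ i - 2),
      sInf {N : Submodule F (Fin (n + 1) → F) | (∃ c ≤ n, N = nucleus F n c) ∧ N ≠ ⊥} =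
        Pi.spanSubset F {⟨p ^ i - 1, by omega⟩} := by
    intro i hi
    rw [sInf_nonzero_nuclei_eq hF
        (isLeast_nonempty_nucleusSupport hp (i := i) (by omega) (by omega)),
      nucleus_eq_spanSubset hF (by omega), nucleusSupport_pow_eq_singleton hp (by omega)]
  refine ⟨⟨fun h1 => ?_, ?_⟩, fun i hi => ?_⟩
  · rcases Set.eq_empty_or_nonempty {c | c ≤ n ∧ (nucleusSupport F n c).Nonempty} with
      hempty | hne
    · rw [sInf_eq_top.mpr, finrank_top, Module.finrank_fin_fun] at h1
      · omega
      rintro N ⟨⟨c, hc, rfl⟩, hbot⟩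
      exact (hempty.subset ⟨hc, (nucleus_ne_bot_iff hF hc).mp hbot⟩ : c ∈ (∅ : Set ℕ)).elim
    · have hleast : IsLeast _ (sInf _) := ⟨Nat.sInf_mem hne, fun c hc => Nat.sInf_le hc⟩
      rw [sInf_nonzero_nuclei_eq hF hleast, nucleus_eq_spanSubset hF hleast.1.1,
        Pi.dim_spanSubset] at h1
      obtain ⟨i, hi⟩ := exists_add_two_eq_two_mul_pow_of_isLeast hp hleast h1
      exact ⟨i, by omega⟩
  · rintro ⟨i, hi⟩
    rw [hspecial i hi, Pi.dim_spanSubset, Set.ncard_singleton]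
  · simp [hspecial i hi, Pi.spanSubset]
end

section
/- Let F be a field of characteristic p > 0, n ≥ 2, j ∈ {0,...,n}, and define Ω(j) := {m : 0 ≤ m ≤ n, C(m,j) ≢ 0 mod p} and Ψ(j) := {j, n−j}. Then both Λ ↦ Ω(Λ) := ∪_{j∈Λ} Ω(j) and Λ ↦ Ψ(Λ) := ∪_{j∈Λ} {j, n−j} are closure operators on subsets of {0,1,...,n}: they are extensive (Λ ⊆ Ω(Λ) and Λ ⊆ Ψ(Λ)), monotone, and idempotent. -/
/-- `Ω(j) = {m | 0 ≤ m ≤ n, C(m,j) ≢ 0 mod p}`. -/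
def OmegaJ (p n j : ℕ) : Finset ℕ :=
  (Finset.range (n + 1)).filter fun m => ¬ p ∣ Nat.choose m j

/-- `Ω(Λ) = ∪_{j ∈ Λ} Ω(j)`. -/
def OmegaCl (p n : ℕ) (Λ : Finset ℕ) : Finset ℕ := Λ.biUnion (OmegaJ p n)

/-- `Ψ(Λ) = ∪_{j ∈ Λ} {j, n − j}`. -/
def PsiCl (n : ℕ) (Λ : Finset ℕ) : Finset ℕ := Λ.biUnion fun j => {j, n - j}

/-! Both operators have the form `Λ ↦ ⋃_{j ∈ Λ} f j` with `j ∈ f j` and `f m ⊆ f j` whenever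
`m ∈ f j`, and any such operator is a closure operator. For `Ω` the transitivity is the
identity `C(k,m) C(m,j) = C(k,j) C(k-j,m-j)`: if `p` divides neither factor on the left, it
cannot divide `C(k,j)`. For `Ψ` it is the involution `n - (n - j) = j` for `j ≤ n`. -/

namespace Finset

variable {α : Type*} [DecidableEq α] {f : α → Finset α} {Λ : Finset α}

theorem subset_biUnion_of_forall_mem_self (hself : ∀ a ∈ Λ, a ∈ f a) : Λ ⊆ Λ.biUnion f :=
  fun a ha => mem_biUnion.2 ⟨a, ha, hself a ha⟩

theorem biUnion_biUnion_of_forall_mem_self_of_trans (hself : ∀ a ∈ Λ, a ∈ f a)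
    (htrans : ∀ a ∈ Λ, ∀ b ∈ f a, f b ⊆ f a) : (Λ.biUnion f).biUnion f = Λ.biUnion f := by
  refine Subset.antisymm ?_ (biUnion_subset_biUnion_of_subset_left f
    (subset_biUnion_of_forall_mem_self hself))
  intro c hc
  obtain ⟨b, hb, hcb⟩ := mem_biUnion.1 hc
  obtain ⟨a, ha, hba⟩ := mem_biUnion.1 hb
  exact mem_biUnion.2 ⟨a, ha, htrans a ha b hba hcb⟩

end Finset

theorem Nat.Prime.not_dvd_choose_of_not_dvd_choose_of_not_dvd_choose {p k m j : ℕ}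
    (hp : p.Prime) (hkm : ¬ p ∣ k.choose m) (hmj : ¬ p ∣ m.choose j) : ¬ p ∣ k.choose j := by
  have hjm : j ≤ m := by
    by_contra! h
    exact hmj (by simp [Nat.choose_eq_zero_of_lt h])
  intro hkj
  have hprod : p ∣ k.choose m * m.choose j := by
    rw [Nat.choose_mul hjm]
    exact hkj.mul_right _
  exact (hp.dvd_mul.1 hprod).elim hkm hmj

theorem mem_omegaJ_self {p n j : ℕ} (hp : p ≠ 1) (hj : j ≤ n) : j ∈ OmegaJ p n j := by
  simp [OmegaJ, Nat.lt_succ_iff.2 hj, hp]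

theorem omegaJ_subset_of_mem {p n j m : ℕ} (hp : p.Prime) (hm : m ∈ OmegaJ p n j) :
    OmegaJ p n m ⊆ OmegaJ p n j := by
  intro k hk
  simp only [OmegaJ, Finset.mem_filter] at hm hk ⊢
  exact ⟨hk.1, hp.not_dvd_choose_of_not_dvd_choose_of_not_dvd_choose hk.2 hm.2⟩

theorem pair_sub_subset_of_mem {n j m : ℕ} (hj : j ≤ n) (hm : m ∈ ({j, n - j} : Finset ℕ)) :
    ({m, n - m} : Finset ℕ) ⊆ {j, n - j} := by
  rcases Finset.mem_insert.1 hm with rfl | hm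
  · rfl
  · rw [Finset.mem_singleton.1 hm, Nat.sub_sub_self hj, Finset.pair_comm]

theorem omega_psi_closure_operators_general (p n : ℕ) (hp : p.Prime) :
    (∀ Λ : Finset ℕ, Λ ⊆ Finset.range (n + 1) → Λ ⊆ OmegaCl p n Λ) ∧
    (∀ Λ : Finset ℕ, Λ ⊆ Finset.range (n + 1) → Λ ⊆ PsiCl n Λ) ∧
    (∀ Λ Λ' : Finset ℕ, Λ ⊆ Λ' → OmegaCl p n Λ ⊆ OmegaCl p n Λ') ∧
    (∀ Λ Λ' : Finset ℕ, Λ ⊆ Λ' → PsiCl n Λ ⊆ PsiCl n Λ') ∧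
    (∀ Λ : Finset ℕ, Λ ⊆ Finset.range (n + 1) →
      OmegaCl p n (OmegaCl p n Λ) = OmegaCl p n Λ) ∧
    (∀ Λ : Finset ℕ, Λ ⊆ Finset.range (n + 1) → PsiCl n (PsiCl n Λ) = PsiCl n Λ) := by
  have le_of_mem : ∀ {Λ : Finset ℕ}, Λ ⊆ Finset.range (n + 1) → ∀ j ∈ Λ, j ≤ n :=
    fun hΛ j hj => Finset.mem_range_succ_iff.1 (hΛ hj)
  have omega_self : ∀ {Λ : Finset ℕ}, Λ ⊆ Finset.range (n + 1) → ∀ j ∈ Λ, j ∈ OmegaJ p n j :=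
    fun hΛ j hj => mem_omegaJ_self hp.ne_one (le_of_mem hΛ j hj)
  have psi_self : ∀ j : ℕ, j ∈ ({j, n - j} : Finset ℕ) := fun j => Finset.mem_insert_self _ _
  refine ⟨fun _ hΛ => Finset.subset_biUnion_of_forall_mem_self (omega_self hΛ),
    fun _ _ => Finset.subset_biUnion_of_forall_mem_self fun j _ => psi_self j,
    fun _ _ h => Finset.biUnion_subset_biUnion_of_subset_left _ h,
    fun _ _ h => Finset.biUnion_subset_biUnion_of_subset_left _ h,
    fun _ hΛ => Finset.biUnion_biUnion_of_forall_mem_self_of_trans (omega_self hΛ)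
      fun _ _ _ hm => omegaJ_subset_of_mem hp hm,
    fun _ hΛ => Finset.biUnion_biUnion_of_forall_mem_self_of_trans (fun j _ => psi_self j)
      fun j hj _ hm => pair_sub_subset_of_mem (le_of_mem hΛ j hj) hm⟩

/-- For a prime `p` (the characteristic) and `n ≥ 2`, both `Ω` and `Ψ` are closure
operators on the subsets of `{0, 1, …, n}`: they are extensive, monotone, and
idempotent. -/
theorem omega_psi_closure_operators (p n : ℕ) (hp : p.Prime) (hn : 2 ≤ n) :
    (∀ Λ : Finset ℕ, Λ ⊆ Finset.range (n + 1) → Λ ⊆ OmegaCl p n Λ) ∧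
    (∀ Λ : Finset ℕ, Λ ⊆ Finset.range (n + 1) → Λ ⊆ PsiCl n Λ) ∧
    (∀ Λ Λ' : Finset ℕ, Λ ⊆ Λ' → OmegaCl p n Λ ⊆ OmegaCl p n Λ') ∧
    (∀ Λ Λ' : Finset ℕ, Λ ⊆ Λ' → PsiCl n Λ ⊆ PsiCl n Λ') ∧
    (∀ Λ : Finset ℕ, Λ ⊆ Finset.range (n + 1) →
      OmegaCl p n (OmegaCl p n Λ) = OmegaCl p n Λ) ∧
    (∀ Λ : Finset ℕ, Λ ⊆ Finset.range (n + 1) → PsiCl n (PsiCl n Λ) = PsiCl n Λ) :=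
  omega_psi_closure_operators_general p n hp
end
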